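/- Let γ be an exponentially distributed random variable with mean γ̄ > 0 and let p ∈ (0,1). Then the random variable X = log₂(1 + (1−p)·γ/(1 + p·γ)) has a probability density (with respect to Lebesgue measure) given by g(x) = ln(2)·(1−p)·2^x/((1 − p·2^x)²·γ̄)·exp(−((2^x − 1)/(1 − p·2^x))/γ̄) for 0 ≤ x < log₂(1/p), and g(x) = 0 otherwise. -/

import Mathlib

open MeasureTheory ProbabilityTheory Real Set Filter Topology
open scoped ENNReal

lemma sc_ratio_eq (p t : ℝ) (hpt : 1 + p * t ≠ 0) :
    1 + (1 - p) * t / (1 + p * t) = (1 + t) / (1 + p * t) := by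
  field_simp
  ring

lemma sc_g_nonneg (p t : ℝ) (hp : 0 < p) (hp1 : p < 1) (ht : 0 ≤ t) :
    0 ≤ Real.logb 2 (1 + (1 - p) * t / (1 + p * t)) := by
  have hpt : 0 < 1 + p * t := by nlinarith
  rw [sc_ratio_eq p t hpt.ne']
  apply Real.logb_nonneg one_lt_two
  rw [le_div_iff₀ hpt]
  nlinarith

lemma sc_g_le_iff (p t x : ℝ) (hp : 0 < p) (hp1 : p < 1) (ht : 0 ≤ t) :
    Real.logb 2 (1 + (1 - p) * t / (1 + p * t)) ≤ x
      ↔ t * (1 - p * (2:ℝ) ^ x) ≤ (2:ℝ) ^ x - 1 := by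
  have hpt : 0 < 1 + p * t := by nlinarith
  rw [sc_ratio_eq p t hpt.ne']
  have hratio : 0 < (1 + t) / (1 + p * t) := by positivity
  rw [Real.logb_le_iff_le_rpow one_lt_two hratio, div_le_iff₀ hpt]
  constructor <;> intro h <;> nlinarith

lemma sc_den_pos (p : ℝ) (hp : 0 < p) {y : ℝ} (hy : y < Real.logb 2 (1 / p)) :
    0 < 1 - p * (2:ℝ) ^ y := by
  have h2 : (2:ℝ) ^ y < (2:ℝ) ^ (Real.logb 2 (1 / p)) :=
    Real.rpow_lt_rpow_of_exponent_lt one_lt_two hy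
  rw [Real.rpow_logb two_pos (by norm_num) (by positivity)] at h2
  have : p * (2:ℝ) ^ y < p * (1 / p) := mul_lt_mul_of_pos_left h2 hp
  rw [mul_one_div_cancel hp.ne'] at this
  linarith

lemma sc_G_nonneg (p γbar : ℝ) (hp1 : p < 1) (hγbar : 0 < γbar) (y : ℝ) :
    0 ≤ Real.log 2 * (1 - p) * (2 : ℝ) ^ y / ((1 - p * (2 : ℝ) ^ y) ^ 2 * γbar)
        * Real.exp (-((((2 : ℝ) ^ y - 1) / (1 - p * (2 : ℝ) ^ y)) / γbar)) := by
  apply mul_nonneg _ (Real.exp_pos _).le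
  apply div_nonneg
  · exact mul_nonneg (mul_nonneg (Real.log_nonneg one_le_two) (by linarith))
      (Real.rpow_pos_of_pos two_pos y).le
  · exact mul_nonneg (sq_nonneg _) hγbar.le

lemma sc_hasDerivAt (p γbar : ℝ) (hγbar : 0 < γbar) (x : ℝ)
    (hne : (1 - p * (2:ℝ) ^ x) ≠ 0) :
    HasDerivAt (fun y => 1 - Real.exp (-((((2:ℝ) ^ y - 1) / (1 - p * (2:ℝ) ^ y)) / γbar)))
      (Real.log 2 * (1 - p) * (2 : ℝ) ^ x / ((1 - p * (2 : ℝ) ^ x) ^ 2 * γbar)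
        * Real.exp (-((((2 : ℝ) ^ x - 1) / (1 - p * (2 : ℝ) ^ x)) / γbar))) x := by
  have h2 : HasDerivAt (fun y => (2:ℝ) ^ y) ((2:ℝ) ^ x * Real.log 2) x :=
    (Real.hasStrictDerivAt_const_rpow two_pos x).hasDerivAt
  have hnum : HasDerivAt (fun y => (2:ℝ) ^ y - 1) ((2:ℝ) ^ x * Real.log 2) x := h2.sub_const 1
  have hden : HasDerivAt (fun y => 1 - p * (2:ℝ) ^ y) (-(p * ((2:ℝ) ^ x * Real.log 2))) x :=
    (h2.const_mul p).const_sub 1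
  have h := ((((hnum.div hden hne).div_const γbar).neg).exp).const_sub 1
  refine h.congr_deriv ?_
  have hg : γbar ≠ 0 := hγbar.ne'
  simp only [Pi.neg_apply, Pi.div_apply]
  field_simp
  ring

/-- continuity of G on a set where denominator nonzero -/
lemma sc_G_contOn (p γbar : ℝ) (hγbar : 0 < γbar) (s : Set ℝ)
    (hs : ∀ y ∈ s, (1 - p * (2:ℝ) ^ y) ≠ 0) :
    ContinuousOn (fun y => Real.log 2 * (1 - p) * (2 : ℝ) ^ y / ((1 - p * (2 : ℝ) ^ y) ^ 2 * γbar)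
        * Real.exp (-((((2 : ℝ) ^ y - 1) / (1 - p * (2 : ℝ) ^ y)) / γbar))) s := by
  have hc2 : Continuous (fun y : ℝ => (2:ℝ) ^ y) :=
    continuous_iff_continuousAt.2 fun y => Real.continuousAt_const_rpow two_ne_zero
  apply ContinuousOn.mul
  · apply ContinuousOn.div (by fun_prop)
    · fun_prop
    · intro y hy
      have := hs y hy
      have : ((1 - p * (2:ℝ) ^ y) ^ 2) ≠ 0 := pow_ne_zero 2 this
      positivity
  · apply Real.continuous_exp.comp_continuousOn
    apply ContinuousOn.neg
    apply ContinuousOn.div_const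
    exact ContinuousOn.div (by fun_prop) (by fun_prop) hs

lemma sc_lintegral_Icc (p γbar : ℝ) (hp : 0 < p) (hp1 : p < 1) (hγbar : 0 < γbar)
    {x : ℝ} (hx0 : 0 ≤ x) (hxL : x < Real.logb 2 (1 / p)) :
    (∫⁻ y in Icc 0 x, ENNReal.ofReal (if 0 ≤ y ∧ y < Real.logb 2 (1 / p) then
            Real.log 2 * (1 - p) * (2 : ℝ) ^ y / ((1 - p * (2 : ℝ) ^ y) ^ 2 * γbar)
              * Real.exp (-((((2 : ℝ) ^ y - 1) / (1 - p * (2 : ℝ) ^ y)) / γbar))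
          else 0))
      = ENNReal.ofReal (1 - Real.exp (-((((2:ℝ) ^ x - 1) / (1 - p * (2:ℝ) ^ x)) / γbar))) := by
  set G : ℝ → ℝ := fun y => Real.log 2 * (1 - p) * (2 : ℝ) ^ y / ((1 - p * (2 : ℝ) ^ y) ^ 2 * γbar)
              * Real.exp (-((((2 : ℝ) ^ y - 1) / (1 - p * (2 : ℝ) ^ y)) / γbar)) with hG
  have hcong : ∀ᵐ y ∂(volume.restrict (Icc 0 x)),
      ENNReal.ofReal (if 0 ≤ y ∧ y < Real.logb 2 (1 / p) then G y else 0) = ENNReal.ofReal (G y) := by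
    refine ae_restrict_of_forall_mem measurableSet_Icc fun y hy => ?_
    rw [if_pos ⟨hy.1, lt_of_le_of_lt hy.2 hxL⟩]
  rw [lintegral_congr_ae hcong]
  have hcont : ContinuousOn G (Icc 0 x) :=
    sc_G_contOn p γbar hγbar _ (fun y hy => (sc_den_pos p hp (lt_of_le_of_lt hy.2 hxL)).ne')
  have hint : IntegrableOn G (Icc 0 x) := hcont.integrableOn_compact isCompact_Icc
  rw [← ofReal_integral_eq_lintegral_ofReal hint
    (ae_restrict_of_forall_mem measurableSet_Icc fun y _ => sc_G_nonneg p γbar hp1 hγbar y)]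
  congr 1
  have hIoc : ∫ y in Icc 0 x, G y = ∫ y in (0:ℝ)..x, G y := by
    rw [integral_Icc_eq_integral_Ioc, intervalIntegral.integral_of_le hx0]
  rw [hIoc]
  rw [intervalIntegral.integral_eq_sub_of_hasDerivAt
    (f := fun y => 1 - Real.exp (-((((2:ℝ) ^ y - 1) / (1 - p * (2:ℝ) ^ y)) / γbar)))
    (fun t ht => by
      rw [uIcc_of_le hx0] at ht
      exact sc_hasDerivAt p γbar hγbar t (sc_den_pos p hp (lt_of_le_of_lt ht.2 hxL)).ne')
    (by
      rw [intervalIntegrable_iff_integrableOn_Icc_of_le hx0]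
      exact hint)]
  simp [Real.rpow_zero]

lemma sc_expMeasure_Iio_zero (r : ℝ) : expMeasure r (Iio 0) = 0 := by
  rw [show expMeasure r = gammaMeasure 1 r from rfl, gammaMeasure,
    withDensity_apply _ measurableSet_Iio]
  exact lintegral_gammaPDF_of_nonpos le_rfl

lemma sc_expMeasure_ae_nonneg (r : ℝ) : ∀ᵐ t ∂(expMeasure r), 0 ≤ t := by
  rw [ae_iff]
  apply measure_mono_null (fun t ht => ?_) (sc_expMeasure_Iio_zero r)
  simpa using not_le.1 ht

lemma sc_expMeasure_congr (r : ℝ) {A B : Set ℝ} (h : ∀ t, 0 ≤ t → (t ∈ A ↔ t ∈ B)) :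
    expMeasure r A = expMeasure r B := by
  apply measure_congr
  rw [Filter.eventuallyEq_set]
  filter_upwards [sc_expMeasure_ae_nonneg r] with t ht using h t ht

lemma sc_expMeasure_Iic {r : ℝ} (hr : 0 < r) (t : ℝ) :
    expMeasure r (Iic t) = ENNReal.ofReal (if 0 ≤ t then 1 - Real.exp (-(r * t)) else 0) := by
  rw [show expMeasure r = gammaMeasure 1 r from rfl, gammaMeasure,
    withDensity_apply _ measurableSet_Iic]
  exact lintegral_exponentialPDF_eq_antiDeriv hr t

lemma sc_nu_Ico (p γbar : ℝ) (hp : 0 < p) (hp1 : p < 1) (hγbar : 0 < γbar) :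
    volume.withDensity (fun x =>
          ENNReal.ofReal (if 0 ≤ x ∧ x < Real.logb 2 (1 / p) then
            Real.log 2 * (1 - p) * (2 : ℝ) ^ x / ((1 - p * (2 : ℝ) ^ x) ^ 2 * γbar)
              * Real.exp (-((((2 : ℝ) ^ x - 1) / (1 - p * (2 : ℝ) ^ x)) / γbar))
          else 0)) (Ico 0 (Real.logb 2 (1 / p))) = 1 := by
  set L := Real.logb 2 (1 / p) with hLdef
  have hL : 0 < L := Real.logb_pos one_lt_two (by rw [lt_div_iff₀ hp]; linarith)
  set ν := volume.withDensity (fun x =>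
          ENNReal.ofReal (if 0 ≤ x ∧ x < L then
            Real.log 2 * (1 - p) * (2 : ℝ) ^ x / ((1 - p * (2 : ℝ) ^ x) ^ 2 * γbar)
              * Real.exp (-((((2 : ℝ) ^ x - 1) / (1 - p * (2 : ℝ) ^ x)) / γbar))
          else 0)) with hν
  set u : ℕ → ℝ := fun n => L - L / (n + 1) with hu
  have hu0 : ∀ n : ℕ, 0 ≤ u n := by
    intro n
    have : L / (n + 1) ≤ L / 1 := by
      apply div_le_div_of_nonneg_left hL.le one_pos
      exact_mod_cast Nat.le_add_left 1 n
    simp only [hu, div_one] at this ⊢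
    linarith
  have huL : ∀ n : ℕ, u n < L := by
    intro n
    have : 0 < L / (n + 1) := by positivity
    simp only [hu]; linarith
  have hmono : Monotone (fun n : ℕ => Icc (0:ℝ) (u n)) := by
    intro m n hmn
    apply Icc_subset_Icc le_rfl
    apply sub_le_sub le_rfl
    apply div_le_div_of_nonneg_left hL.le (by positivity)
    exact_mod_cast Nat.succ_le_succ hmn
  have hunion : ⋃ n, Icc (0:ℝ) (u n) = Ico 0 L := by
    ext y
    simp only [mem_iUnion, mem_Icc, mem_Ico]
    constructor
    · rintro ⟨n, h0, h1⟩
      exact ⟨h0, lt_of_le_of_lt h1 (huL n)⟩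
    · rintro ⟨h0, h1⟩
      obtain ⟨n, hn⟩ := exists_nat_gt (L / (L - y))
      refine ⟨n, h0, ?_⟩
      have hLy : 0 < L - y := by linarith
      have : L / (n + 1) ≤ L - y := by
        rw [div_le_iff₀ (by positivity)]
        have : L / (L - y) < n + 1 := by push_cast; linarith
        rw [div_lt_iff₀ hLy] at this
        linarith
      simp only [hu]; linarith
  have htend := tendsto_measure_iUnion_atTop (μ := ν) hmono
  rw [hunion] at htend
  -- compute ν (Icc 0 (u n))
  have hval : ∀ n : ℕ, ν (Icc 0 (u n)) =
      ENNReal.ofReal (1 - Real.exp (-((((2:ℝ) ^ (u n) - 1) / (1 - p * (2:ℝ) ^ (u n))) / γbar))) := by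
    intro n
    rw [hν, withDensity_apply _ measurableSet_Icc]
    exact sc_lintegral_Icc p γbar hp hp1 hγbar (hu0 n) (huL n)
  simp only [Function.comp_def, hval] at htend
  -- the sequence tends to 1
  have htu : Tendsto u atTop (𝓝 L) := by
    have h0 : Tendsto (fun n : ℕ => L / (n + 1)) atTop (𝓝 0) := by
      have := tendsto_one_div_add_atTop_nhds_zero_nat (𝕜 := ℝ)
      have h2 : Tendsto (fun n : ℕ => L * (1 / (n + 1))) atTop (𝓝 (L * 0)) := this.const_mul L
      simpa [mul_one_div, div_eq_mul_inv] using h2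
    have := tendsto_const_nhds (x := L) (f := atTop (α := ℕ)) |>.sub h0
    simpa using this
  have h2L : (2:ℝ) ^ L = 1 / p := Real.rpow_logb two_pos (by norm_num) (by positivity)
  have hc2 : Continuous (fun y : ℝ => (2:ℝ) ^ y) :=
    continuous_iff_continuousAt.2 fun y => Real.continuousAt_const_rpow two_ne_zero
  have htwo : Tendsto (fun n => (2:ℝ) ^ (u n)) atTop (𝓝 (1 / p)) := by
    have := (hc2.tendsto L).comp htu
    rwa [h2L] at this
  have hnum : Tendsto (fun n => (2:ℝ) ^ (u n) - 1) atTop (𝓝 (1 / p - 1)) :=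
    htwo.sub_const 1
  have hden : Tendsto (fun n => (1 - p * (2:ℝ) ^ (u n))) atTop (𝓝[>] 0) := by
    apply tendsto_nhdsWithin_of_tendsto_nhds_of_eventually_within
    · have : Tendsto (fun n => 1 - p * (2:ℝ) ^ (u n)) atTop (𝓝 (1 - p * (1/p))) :=
        (htwo.const_mul p).const_sub 1
      simpa [mul_one_div_cancel hp.ne', mul_inv_cancel₀ hp.ne'] using this
    · exact Eventually.of_forall fun n => sc_den_pos p hp (huL n)
  have hs : Tendsto (fun n => ((2:ℝ) ^ (u n) - 1) / (1 - p * (2:ℝ) ^ (u n))) atTop atTop := by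
    simp only [div_eq_mul_inv]
    exact hnum.pos_mul_atTop (by have := one_lt_one_div hp hp1; linarith)
      (tendsto_inv_nhdsGT_zero.comp hden)
  have hexp : Tendsto (fun n => Real.exp (-((((2:ℝ) ^ (u n) - 1) / (1 - p * (2:ℝ) ^ (u n))) / γbar)))
      atTop (𝓝 0) := by
    apply Real.tendsto_exp_atBot.comp
    apply tendsto_neg_atTop_atBot.comp
    exact hs.atTop_div_const hγbar
  have hone : Tendsto (fun n => ENNReal.ofReal
      (1 - Real.exp (-((((2:ℝ) ^ (u n) - 1) / (1 - p * (2:ℝ) ^ (u n))) / γbar)))) atTop (𝓝 1) := by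
    have : Tendsto (fun n => 1 - Real.exp (-((((2:ℝ) ^ (u n) - 1) / (1 - p * (2:ℝ) ^ (u n))) / γbar)))
        atTop (𝓝 1) := by
      have := (tendsto_const_nhds (x := (1:ℝ)) (f := atTop (α := ℕ))).sub hexp
      simpa using this
    have := (ENNReal.continuous_ofReal.tendsto 1).comp this
    rw [ENNReal.ofReal_one] at this
    exact this
  exact tendsto_nhds_unique htend hone

/-- For exponential SNR `γ` with mean `γ̄`, without interference cancellation the superposed
packet's mutual information `X = log₂(1+(1−p)·γ/(1+p·γ))` has Lebesgue density
`g(x) = ln 2·(1−p)·2^x/((1−p·2^x)²·γ̄) · exp(−((2^x−1)/(1−p·2^x))/γ̄)` for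
`0 ≤ x < log₂(1/p)`, else `0`. -/
theorem density_of_sc_interf_ami {Ω : Type*} [MeasurableSpace Ω]
    (P : Measure Ω) [IsProbabilityMeasure P]
    (γ : Ω → ℝ) (hγmeas : Measurable γ) (γbar : ℝ) (hγbar : 0 < γbar)
    (hexp : Measure.map γ P = expMeasure γbar⁻¹)
    (p : ℝ) (hp : 0 < p) (hp1 : p < 1) :
    Measure.map (fun ω => Real.logb 2 (1 + (1 - p) * γ ω / (1 + p * γ ω))) P
      = volume.withDensity (fun x =>
          ENNReal.ofReal (if 0 ≤ x ∧ x < Real.logb 2 (1 / p) then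
            Real.log 2 * (1 - p) * (2 : ℝ) ^ x / ((1 - p * (2 : ℝ) ^ x) ^ 2 * γbar)
              * Real.exp (-((((2 : ℝ) ^ x - 1) / (1 - p * (2 : ℝ) ^ x)) / γbar))
          else 0)) := by
  have hL : 0 < Real.logb 2 (1 / p) :=
    Real.logb_pos one_lt_two (by rw [lt_div_iff₀ hp]; linarith)
  have h2L : (2:ℝ) ^ (Real.logb 2 (1 / p)) = 1 / p :=
    Real.rpow_logb two_pos (by norm_num) (by positivity)
  set L := Real.logb 2 (1 / p) with hLdef
  set f : ℝ → ℝ≥0∞ := fun x =>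
          ENNReal.ofReal (if 0 ≤ x ∧ x < L then
            Real.log 2 * (1 - p) * (2 : ℝ) ^ x / ((1 - p * (2 : ℝ) ^ x) ^ 2 * γbar)
              * Real.exp (-((((2 : ℝ) ^ x - 1) / (1 - p * (2 : ℝ) ^ x)) / γbar))
          else 0) with hf
  set g : ℝ → ℝ := fun t => Real.logb 2 (1 + (1 - p) * t / (1 + p * t)) with hg
  have hgmeas : Measurable g := by
    have : g = fun t => Real.log (1 + (1 - p) * t / (1 + p * t)) / Real.log 2 := by
      funext t; rw [hg]; simp only [Real.logb]
    rw [this]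
    refine (Real.measurable_log.comp ?_).div_const _
    exact measurable_const.add ((measurable_const.mul measurable_id).div
      (measurable_const.add (measurable_const.mul measurable_id)))
  have hXmeas : Measurable (fun ω => g (γ ω)) := hgmeas.comp hγmeas
  have hfun : (fun ω => Real.logb 2 (1 + (1 - p) * γ ω / (1 + p * γ ω)))
      = fun ω => g (γ ω) := rfl
  rw [hfun]
  haveI : IsProbabilityMeasure (Measure.map (fun ω => g (γ ω)) P) :=
    Measure.isProbabilityMeasure_map hXmeas.aemeasurable
  haveI : IsProbabilityMeasure (expMeasure γbar⁻¹) :=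
    isProbabilityMeasure_expMeasure (inv_pos.2 hγbar)
  refine Measure.ext_of_Iic _ _ (fun a => ?_)
  rw [Measure.map_apply hXmeas measurableSet_Iic,
    show (fun ω => g (γ ω)) ⁻¹' (Iic a) = γ ⁻¹' (g ⁻¹' Iic a) from rfl,
    ← Measure.map_apply hγmeas (hgmeas measurableSet_Iic), hexp,
    withDensity_apply _ measurableSet_Iic]
  rcases lt_or_ge a 0 with ha | ha
  · rw [sc_expMeasure_congr _ (A := g ⁻¹' Iic a) (B := ∅)
      (fun t ht => by
        simp only [mem_preimage, mem_Iic, mem_empty_iff_false, iff_false, not_le]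
        have := sc_g_nonneg p t hp hp1 ht
        calc a < 0 := ha
          _ ≤ g t := this),
      measure_empty]
    symm
    rw [setLIntegral_congr_fun measurableSet_Iic (fun y hy => ?_), lintegral_zero]
    have : ¬ (0 ≤ y ∧ y < L) := fun hcon => by
      have : y ≤ a := hy
      linarith [hcon.1]
    simp [hf, this]
  · rcases lt_or_ge a L with haL | haL
    · have hden := sc_den_pos p hp haL
      have h1a : (1:ℝ) ≤ (2:ℝ) ^ a := Real.one_le_rpow one_le_two ha
      set sa := (((2:ℝ) ^ a - 1) / (1 - p * (2:ℝ) ^ a)) with hsa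
      have hsa0 : 0 ≤ sa := div_nonneg (by linarith) hden.le
      rw [sc_expMeasure_congr _ (A := g ⁻¹' Iic a) (B := Iic sa)
        (fun t ht => by
          simp only [mem_preimage, mem_Iic]
          rw [hg]
          rw [sc_g_le_iff p t a hp hp1 ht, hsa, le_div_iff₀ hden]),
        sc_expMeasure_Iic (inv_pos.2 hγbar) sa, if_pos hsa0]
      rw [lintegral_Iic_eq_lintegral_Iio_add_Icc _ ha]
      have h1 : (∫⁻ y in Iio (0:ℝ), f y) = 0 := by
        rw [setLIntegral_congr_fun measurableSet_Iio (fun y hy => ?_), lintegral_zero]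
        have : ¬ (0 ≤ y ∧ y < L) := fun hcon => absurd hy (not_lt.2 hcon.1)
        simp [hf, this]
      rw [h1, zero_add, hf, sc_lintegral_Icc p γbar hp hp1 hγbar ha haL]
      rw [← hsa, div_eq_inv_mul]
    · rw [sc_expMeasure_congr _ (A := g ⁻¹' Iic a) (B := univ)
        (fun t ht => by
          simp only [mem_preimage, mem_Iic, mem_univ, iff_true]
          rw [hg, sc_g_le_iff p t a hp hp1 ht]
          have h2a : (1:ℝ)/p ≤ (2:ℝ) ^ a := by
            rw [← h2L]
            exact Real.rpow_le_rpow_of_exponent_le one_le_two haL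
          have hinv : (1:ℝ) < 1/p := one_lt_one_div hp hp1
          have hnp : 1 - p * (2:ℝ) ^ a ≤ 0 := by
            have : p * (1/p) ≤ p * (2:ℝ) ^ a := mul_le_mul_of_nonneg_left h2a hp.le
            rw [mul_one_div_cancel hp.ne'] at this
            linarith
          calc t * (1 - p * (2:ℝ) ^ a) ≤ 0 := mul_nonpos_of_nonneg_of_nonpos ht hnp
            _ ≤ (2:ℝ) ^ a - 1 := by linarith),
        measure_univ]
      symm
      have hsub : Ico (0:ℝ) L ⊆ Iic a := fun y hy => le_trans hy.2.le haL
      have hsplit : Iic a = Ico (0:ℝ) L ∪ (Iic a \ Ico 0 L) := (union_diff_cancel hsub).symm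
      have hzero : (∫⁻ y in Iic a \ Ico (0:ℝ) L, f y) = 0 := by
        rw [setLIntegral_congr_fun (measurableSet_Iic.diff measurableSet_Ico)
          (fun y hy => ?_), lintegral_zero]
        have : ¬ (0 ≤ y ∧ y < L) := fun hcon => hy.2 (mem_Ico.2 hcon)
        simp [hf, this]
      calc (∫⁻ y in Iic a, f y) = (volume.withDensity f) (Iic a) :=
            (withDensity_apply _ measurableSet_Iic).symm
        _ = (volume.withDensity f) (Ico 0 L ∪ (Iic a \ Ico 0 L)) := by rw [← hsplit]
        _ = (volume.withDensity f) (Ico 0 L) := by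
            have hz2 : (volume.withDensity f) (Iic a \ Ico 0 L) = 0 := by
              rw [withDensity_apply _ (measurableSet_Iic.diff measurableSet_Ico)]
              exact hzero
            refine le_antisymm ?_ (measure_mono subset_union_left)
            calc (volume.withDensity f) (Ico 0 L ∪ Iic a \ Ico 0 L)
                ≤ (volume.withDensity f) (Ico 0 L) + (volume.withDensity f) (Iic a \ Ico 0 L) :=
                  measure_union_le _ _
              _ = (volume.withDensity f) (Ico 0 L) := by rw [hz2, add_zero]
        _ = 1 := by rw [hf]; exact sc_nu_Ico p γbar hp hp1 hγbar
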